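/- Converse step in the causal Chernoff–Stein lemma (finite-n version): with A_n as above, for any acceptance region B_n ⊆ (𝒳×𝒴)^n, Pr(B_n | H₁) ≥ 2^{−n(R+δ)} (1 − Pr(A_n^c | H₀) − Pr(B_n^c | H₀)). -/

import Mathlib

open scoped Classical
open Real

noncomputable section

variable {α β : Type} [Fintype α] [DecidableEq α] [Fintype β] [DecidableEq β]

/-- Probability of the event `E` under the joint pmf `p` of `(X^n, Y^n)`. -/
def pr {n : ℕ} (p : (Fin n → α) → (Fin n → β) → ℝ)
    (E : (Fin n → α) → (Fin n → β) → Prop) : ℝ :=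
  ∑ x, ∑ y, if E x y then p x y else 0

/-- `p` is a probability mass function on pairs of sequences. -/
def IsPmf {n : ℕ} (p : (Fin n → α) → (Fin n → β) → ℝ) : Prop :=
  (∀ x y, 0 ≤ p x y) ∧ ∑ x, ∑ y, p x y = 1

/-- The conditional pmf `p(x_i | x^{i-1}, y^{i-d})` evaluated along `(x, y)`. -/
def condX {n : ℕ} (p : (Fin n → α) → (Fin n → β) → ℝ) (d : ℕ) (i : Fin n)
    (x : Fin n → α) (y : Fin n → β) : ℝ :=
  pr p (fun x' y' => (∀ j, j < i → x' j = x j) ∧ x' i = x i ∧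
      ∀ j : Fin n, (j : ℕ) + d ≤ (i : ℕ) → y' j = y j) /
  pr p (fun x' y' => (∀ j, j < i → x' j = x j) ∧
      ∀ j : Fin n, (j : ℕ) + d ≤ (i : ℕ) → y' j = y j)

/-- The conditional pmf `p(y_i | y^{i-1}, x^{i-d})` evaluated along `(x, y)`. -/
def condY {n : ℕ} (p : (Fin n → α) → (Fin n → β) → ℝ) (d : ℕ) (i : Fin n)
    (x : Fin n → α) (y : Fin n → β) : ℝ :=
  pr p (fun x' y' => (∀ j, j < i → y' j = y j) ∧ y' i = y i ∧
      ∀ j : Fin n, (j : ℕ) + d ≤ (i : ℕ) → x' j = x j) /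
  pr p (fun x' y' => (∀ j, j < i → y' j = y j) ∧
      ∀ j : Fin n, (j : ℕ) + d ≤ (i : ℕ) → x' j = x j)

/-- Causally conditioned pmf `p(x^n || y^{n-d}) = ∏ᵢ p(xᵢ | x^{i-1}, y^{i-d})`. -/
def ccX {n : ℕ} (p : (Fin n → α) → (Fin n → β) → ℝ) (d : ℕ)
    (x : Fin n → α) (y : Fin n → β) : ℝ :=
  ∏ i, condX p d i x y

/-- Causally conditioned pmf `p(y^n || x^{n-d}) = ∏ᵢ p(yᵢ | y^{i-1}, x^{i-d})`. -/
def ccY {n : ℕ} (p : (Fin n → α) → (Fin n → β) → ℝ) (d : ℕ)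
    (x : Fin n → α) (y : Fin n → β) : ℝ :=
  ∏ i, condY p d i x y

/-- Marginal pmf of `X^n`. -/
def pX {n : ℕ} (p : (Fin n → α) → (Fin n → β) → ℝ) (x : Fin n → α) : ℝ := ∑ y, p x y

/-- Marginal pmf of `Y^n`. -/
def pY {n : ℕ} (p : (Fin n → α) → (Fin n → β) → ℝ) (y : Fin n → β) : ℝ := ∑ x, p x y

/-- `H(X^n)` in bits. -/
def HX {n : ℕ} (p : (Fin n → α) → (Fin n → β) → ℝ) : ℝ :=
  -(∑ x, ∑ y, p x y * Real.logb 2 (pX p x))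

/-- `H(Y^n)` in bits. -/
def HY {n : ℕ} (p : (Fin n → α) → (Fin n → β) → ℝ) : ℝ :=
  -(∑ x, ∑ y, p x y * Real.logb 2 (pY p y))

/-- Joint entropy `H(X^n, Y^n)` in bits. -/
def Hjoint {n : ℕ} (p : (Fin n → α) → (Fin n → β) → ℝ) : ℝ :=
  -(∑ x, ∑ y, p x y * Real.logb 2 (p x y))

/-- Conditional entropy `H(X_i | X^{i-1}, Y^{i-d})` in bits. -/
def HcondX {n : ℕ} (p : (Fin n → α) → (Fin n → β) → ℝ) (d : ℕ) (i : Fin n) : ℝ :=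
  -(∑ x, ∑ y, p x y * Real.logb 2 (condX p d i x y))

/-- Conditional entropy `H(Y_i | Y^{i-1}, X^{i-d})` in bits. -/
def HcondY {n : ℕ} (p : (Fin n → α) → (Fin n → β) → ℝ) (d : ℕ) (i : Fin n) : ℝ :=
  -(∑ x, ∑ y, p x y * Real.logb 2 (condY p d i x y))

/-- Causally conditional entropy `H(X^n || Y^{n-d}) = Σᵢ H(Xᵢ | X^{i-1}, Y^{i-d})`. -/
def HccX {n : ℕ} (p : (Fin n → α) → (Fin n → β) → ℝ) (d : ℕ) : ℝ := ∑ i, HcondX p d i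

/-- Causally conditional entropy `H(Y^n || X^{n-d})`. -/
def HccY {n : ℕ} (p : (Fin n → α) → (Fin n → β) → ℝ) (d : ℕ) : ℝ := ∑ i, HcondY p d i

/-- Conditional mutual information `I(Y^i; X_i | X^{i-1})`
(as the expectation of `log (p(xᵢ|x^{i-1},y^i) / p(xᵢ|x^{i-1}))`;
note `condX p n` is `p(xᵢ|x^{i-1})`, conditioning on no `y`'s at all). -/
def cmiYX {n : ℕ} (p : (Fin n → α) → (Fin n → β) → ℝ) (i : Fin n) : ℝ :=
  ∑ x, ∑ y, p x y * Real.logb 2 (condX p 0 i x y / condX p n i x y)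

/-- Conditional mutual information `I(X^i; Y_i | Y^{i-1})`. -/
def cmiXY {n : ℕ} (p : (Fin n → α) → (Fin n → β) → ℝ) (i : Fin n) : ℝ :=
  ∑ x, ∑ y, p x y * Real.logb 2 (condY p 0 i x y / condY p n i x y)

/-- Directed information `I(Y^n → X^n) = Σᵢ I(Y^i; X_i | X^{i-1})`. -/
def dirYX {n : ℕ} (p : (Fin n → α) → (Fin n → β) → ℝ) : ℝ := ∑ i, cmiYX p i

/-- Directed information `I(X^n → Y^n) = Σᵢ I(X^i; Y_i | Y^{i-1})`. -/
def dirXY {n : ℕ} (p : (Fin n → α) → (Fin n → β) → ℝ) : ℝ := ∑ i, cmiXY p i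

/-- Directed information `I(Y^{n-1} → X^n) = Σᵢ I(Y^{i-1}; X_i | X^{i-1})`
(the term for `i = 1` vanishes, so we may sum over all `i`). -/
def dirY1X {n : ℕ} (p : (Fin n → α) → (Fin n → β) → ℝ) : ℝ :=
  ∑ i, ∑ x, ∑ y, p x y * Real.logb 2 (condX p 1 i x y / condX p n i x y)

/-- Mutual information `I(X^n; Y^n)` in bits. -/
def miXY {n : ℕ} (p : (Fin n → α) → (Fin n → β) → ℝ) : ℝ :=
  ∑ x, ∑ y, p x y * Real.logb 2 (p x y / (pX p x * pY p y))

/-- The acceptance region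
`A_n = {(x^n,y^n) : |log (p(y^n||x^n)/p(y^n)) − nR| < nδ}` (on which both
`p(y^n||x^n)` and `p(y^n)` are positive, so the log-likelihood ratio is
well defined). -/
def acceptRegion {n : ℕ} (p : (Fin n → α) → (Fin n → β) → ℝ) (R δ : ℝ)
    (x : Fin n → α) (y : Fin n → β) : Prop :=
  0 < pY p y ∧ 0 < ccY p 0 x y ∧
  |Real.logb 2 (ccY p 0 x y / pY p y) - (n : ℝ) * R| < (n : ℝ) * δ


/-! On `A_n` the likelihood ratio `p(y^n||x^n) / p(y^n)` is below `2^{n(R+δ)}`, and the causal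
chain rule `p(x^n, y^n) = p(x^n||y^{n-1}) p(y^n||x^n)` turns this into
`2^{-n(R+δ)} p(x^n, y^n) ≤ p(x^n||y^{n-1}) p(y^n)` on `A_n`. Summing over `A_n ∩ B_n` and
bounding `Pr(A_n ∩ B_n | H₀) ≥ 1 - Pr(A_nᶜ | H₀) - Pr(B_nᶜ | H₀)` gives the claim. -/

lemma Fin.forall_val_lt_succ_iff {n : ℕ} {P : Fin n → Prop} (i : Fin n) :
    (∀ j : Fin n, (j : ℕ) < i + 1 → P j) ↔ (∀ j, j < i → P j) ∧ P i := by
  refine ⟨fun h => ⟨fun j hj => h j (by omega), h i (by omega)⟩, fun ⟨h, hi⟩ j hj => ?_⟩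
  rcases Nat.lt_succ_iff_lt_or_eq.mp hj with hj | hj
  · exact h j hj
  · exact Fin.ext hj ▸ hi

lemma Finset.prod_range_div_of_ne_zero {G : Type*} [CommGroupWithZero G] (f : ℕ → G)
    (hf : ∀ k, f k ≠ 0) (n : ℕ) : ∏ i ∈ range n, f (i + 1) / f i = f n / f 0 := by
  simpa using congrArg Units.val (Finset.prod_range_div (fun k => Units.mk0 (f k) (hf k)) n)

section

variable {𝒳 𝒴 : Type} [Fintype 𝒳] [Fintype 𝒴] {n : ℕ} {p q : (Fin n → 𝒳) → (Fin n → 𝒴) → ℝ}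

lemma pr_nonneg (hp : ∀ x y, 0 ≤ p x y) (E : (Fin n → 𝒳) → (Fin n → 𝒴) → Prop) :
    0 ≤ pr p E :=
  Finset.sum_nonneg fun x _ => Finset.sum_nonneg fun y _ => by split_ifs <;> simp [hp]

lemma le_pr (hp : ∀ x y, 0 ≤ p x y) {E : (Fin n → 𝒳) → (Fin n → 𝒴) → Prop}
    {x : Fin n → 𝒳} {y : Fin n → 𝒴} (h : E x y) : p x y ≤ pr p E := by
  have hterm : ∀ x' y', 0 ≤ if E x' y' then p x' y' else 0 := fun x' y' => by
    split_ifs <;> simp [hp]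
  calc p x y = if E x y then p x y else 0 := (if_pos h).symm
    _ ≤ ∑ y', if E x y' then p x y' else 0 :=
        Finset.single_le_sum (fun y' _ => hterm x y') (Finset.mem_univ y)
    _ ≤ pr p E :=
        Finset.single_le_sum (fun x' _ => Finset.sum_nonneg fun y' _ => hterm x' y')
          (Finset.mem_univ x)

lemma pr_congr {E F : (Fin n → 𝒳) → (Fin n → 𝒴) → Prop} (h : ∀ x y, E x y ↔ F x y) :
    pr p E = pr p F := by
  simp only [pr, h]

lemma pr_mono (hp : ∀ x y, 0 ≤ p x y) {E F : (Fin n → 𝒳) → (Fin n → 𝒴) → Prop}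
    (h : ∀ x y, E x y → F x y) : pr p E ≤ pr p F :=
  Finset.sum_le_sum fun x _ => Finset.sum_le_sum fun y _ => by
    by_cases hE : E x y
    · simp [hE, h x y hE]
    · split_ifs <;> simp [hp]

lemma mul_pr_le_pr {c : ℝ} {E : (Fin n → 𝒳) → (Fin n → 𝒴) → Prop}
    (h : ∀ x y, E x y → c * p x y ≤ q x y) : c * pr p E ≤ pr q E := by
  simp only [pr, Finset.mul_sum]
  refine Finset.sum_le_sum fun x _ => Finset.sum_le_sum fun y _ => ?_
  split_ifs with hE
  · exact h x y hE
  · simp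

lemma sum_ite_not_eq_one_sub_pr (hp : IsPmf p) (E : (Fin n → 𝒳) → (Fin n → 𝒴) → Prop) :
    (∑ x, ∑ y, if ¬ E x y then p x y else 0) = 1 - pr p E := by
  rw [← hp.2]
  simp only [pr, ← Finset.sum_sub_distrib]
  refine Finset.sum_congr rfl fun x _ => Finset.sum_congr rfl fun y _ => ?_
  by_cases hE : E x y <;> simp [hE]

lemma pr_add_pr_sub_one_le_pr_and (hp : IsPmf p) (E F : (Fin n → 𝒳) → (Fin n → 𝒴) → Prop) :
    pr p E + pr p F - 1 ≤ pr p (fun x y => E x y ∧ F x y) := by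
  rw [← hp.2]
  simp only [pr, ← Finset.sum_add_distrib, ← Finset.sum_sub_distrib]
  refine Finset.sum_le_sum fun x _ => Finset.sum_le_sum fun y _ => ?_
  by_cases hE : E x y <;> by_cases hF : F x y <;> simp [hE, hF, hp.1 x y]

lemma ccX_nonneg (hp : ∀ x y, 0 ≤ p x y) (d : ℕ) (x : Fin n → 𝒳) (y : Fin n → 𝒴) :
    0 ≤ ccX p d x y :=
  Finset.prod_nonneg fun _ _ => div_nonneg (pr_nonneg hp _) (pr_nonneg hp _)

end

lemma pY_nonneg {𝒳 𝒴 : Type} [Fintype 𝒳] {n : ℕ} {p : (Fin n → 𝒳) → (Fin n → 𝒴) → ℝ}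
    (hp : ∀ x y, 0 ≤ p x y) (y : Fin n → 𝒴) : 0 ≤ pY p y :=
  Finset.sum_nonneg fun x _ => hp x y

section ChainRule

variable {𝒳 𝒴 : Type} [Fintype 𝒳] [Fintype 𝒴] {n : ℕ} (p : (Fin n → 𝒳) → (Fin n → 𝒴) → ℝ)
  (x : Fin n → 𝒳) (y : Fin n → 𝒴)

/-- `Pr(X^a = x^a, Y^b = y^b)`. -/
def prefixProb (a b : ℕ) : ℝ :=
  pr p fun x' y' => (∀ j : Fin n, (j : ℕ) < a → x' j = x j) ∧ ∀ j : Fin n, (j : ℕ) < b → y' j = y j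

lemma condX_one_eq_prefixProb_div (i : Fin n) :
    condX p 1 i x y = prefixProb p x y (i + 1) i / prefixProb p x y i i := by
  unfold condX prefixProb
  congr 1
  refine pr_congr fun x' y' => ?_
  simp only [Fin.forall_val_lt_succ_iff, Nat.add_one_le_iff]
  tauto

lemma condY_zero_eq_prefixProb_div (i : Fin n) :
    condY p 0 i x y = prefixProb p x y (i + 1) (i + 1) / prefixProb p x y (i + 1) i := by
  unfold condY prefixProb
  congr 1 <;> refine pr_congr fun x' y' => ?_
  · simp only [Fin.forall_val_lt_succ_iff, add_zero, Nat.le_iff_lt_add_one]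
    tauto
  · simp only [Fin.lt_def, add_zero, Nat.le_iff_lt_add_one, Fin.forall_val_lt_succ_iff]
    tauto

lemma prefixProb_zero_zero (hp : IsPmf p) : prefixProb p x y 0 0 = 1 := by
  simpa [prefixProb, pr] using hp.2

lemma prefixProb_self : prefixProb p x y n n = p x y := by
  have hfull : ∀ (x' : Fin n → 𝒳) (y' : Fin n → 𝒴),
      ((∀ j : Fin n, (j : ℕ) < n → x' j = x j) ∧ ∀ j : Fin n, (j : ℕ) < n → y' j = y j) ↔
        x' = x ∧ y' = y := by
    simp [funext_iff]
  simp only [prefixProb, pr, hfull, ite_and]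
  simp [Finset.sum_ite_eq']

variable {p x y}

lemma le_prefixProb (hp : ∀ x y, 0 ≤ p x y) (a b : ℕ) : p x y ≤ prefixProb p x y a b :=
  le_pr hp ⟨fun _ _ => rfl, fun _ _ => rfl⟩

/-- The chain rule `p(x^n, y^n) = p(x^n || y^{n-1}) p(y^n || x^n)`: the `i`-th factors of the
two causally conditioned products combine to `Pr(X^{i+1}, Y^{i+1}) / Pr(X^i, Y^i)`, and the
product telescopes. -/
lemma ccX_one_mul_ccY_zero (hp : IsPmf p) (hpos : 0 < p x y) :
    ccX p 1 x y * ccY p 0 x y = p x y := by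
  have hM : ∀ a b, prefixProb p x y a b ≠ 0 := fun a b =>
    (hpos.trans_le (le_prefixProb hp.1 a b)).ne'
  calc ccX p 1 x y * ccY p 0 x y
      = ∏ i : Fin n, prefixProb p x y (i + 1) (i + 1) / prefixProb p x y i i := by
        rw [ccX, ccY, ← Finset.prod_mul_distrib]
        refine Finset.prod_congr rfl fun i _ => ?_
        rw [condX_one_eq_prefixProb_div, condY_zero_eq_prefixProb_div]
        field_simp [hM]
    _ = prefixProb p x y n n / prefixProb p x y 0 0 := by
        rw [Fin.prod_univ_eq_prod_range (fun k => prefixProb p x y (k + 1) (k + 1) /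
          prefixProb p x y k k), Finset.prod_range_div_of_ne_zero _ fun k => hM k k]
    _ = p x y := by rw [prefixProb_self, prefixProb_zero_zero p x y hp, div_one]

end ChainRule

lemma rpow_neg_mul_ccY_le_pY_of_acceptRegion {𝒳 𝒴 : Type} [Fintype 𝒳] [Fintype 𝒴] {n : ℕ}
    {p : (Fin n → 𝒳) → (Fin n → 𝒴) → ℝ} {R δ : ℝ} {x : Fin n → 𝒳} {y : Fin n → 𝒴}
    (h : acceptRegion p R δ x y) :
    (2 : ℝ) ^ (-((n : ℝ) * (R + δ))) * ccY p 0 x y ≤ pY p y := by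
  obtain ⟨hpY, hccY, hlog⟩ := h
  have hlt : Real.logb 2 (ccY p 0 x y / pY p y) < (n : ℝ) * (R + δ) := by
    linarith [(abs_lt.mp hlog).2]
  rw [Real.logb_lt_iff_lt_rpow one_lt_two (div_pos hccY hpY), div_lt_iff₀ hpY] at hlt
  rw [Real.rpow_neg zero_le_two, inv_mul_le_iff₀ (by positivity)]
  exact hlt.le

lemma rpow_neg_mul_le_ccX_mul_pY_of_acceptRegion {𝒳 𝒴 : Type} [Fintype 𝒳] [Fintype 𝒴] {n : ℕ}
    {p : (Fin n → 𝒳) → (Fin n → 𝒴) → ℝ} (hp : IsPmf p) {R δ : ℝ} {x : Fin n → 𝒳}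
    {y : Fin n → 𝒴} (h : acceptRegion p R δ x y) :
    (2 : ℝ) ^ (-((n : ℝ) * (R + δ))) * p x y ≤ ccX p 1 x y * pY p y := by
  rcases (hp.1 x y).eq_or_lt with hzero | hpos
  · rw [← hzero, mul_zero]
    exact mul_nonneg (ccX_nonneg hp.1 1 x y) (pY_nonneg hp.1 y)
  · calc (2 : ℝ) ^ (-((n : ℝ) * (R + δ))) * p x y
        = ccX p 1 x y * ((2 : ℝ) ^ (-((n : ℝ) * (R + δ))) * ccY p 0 x y) := by
          rw [← ccX_one_mul_ccY_zero hp hpos]; ring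
      _ ≤ ccX p 1 x y * pY p y :=
          mul_le_mul_of_nonneg_left (rpow_neg_mul_ccY_le_pY_of_acceptRegion h)
            (ccX_nonneg hp.1 1 x y)

theorem causal_stein_converse_general {n : ℕ}
    (p : (Fin n → α) → (Fin n → β) → ℝ) (hp : IsPmf p) (R δ : ℝ)
    (B : (Fin n → α) → (Fin n → β) → Prop) :
    (2 : ℝ) ^ (-((n : ℝ) * (R + δ))) *
        (1 - (∑ x, ∑ y, if ¬ acceptRegion p R δ x y then p x y else 0) -
          (∑ x, ∑ y, if ¬ B x y then p x y else 0)) ≤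
      ∑ x, ∑ y, if B x y then ccX p 1 x y * pY p y else 0 := by
  let A := acceptRegion p R δ
  let q := fun x y => ccX p 1 x y * pY p y
  rw [sum_ite_not_eq_one_sub_pr hp A, sum_ite_not_eq_one_sub_pr hp B]
  change _ ≤ pr q B
  calc (2 : ℝ) ^ (-((n : ℝ) * (R + δ))) * (1 - (1 - pr p A) - (1 - pr p B))
      ≤ (2 : ℝ) ^ (-((n : ℝ) * (R + δ))) * pr p (fun x y => A x y ∧ B x y) := by
        gcongr
        linarith [pr_add_pr_sub_one_le_pr_and hp A B]
    _ ≤ pr q (fun x y => A x y ∧ B x y) :=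
        mul_pr_le_pr fun x y h => rpow_neg_mul_le_ccX_mul_pY_of_acceptRegion hp h.1
    _ ≤ pr q B :=
        pr_mono (fun x y => mul_nonneg (ccX_nonneg hp.1 1 x y) (pY_nonneg hp.1 y)) fun _ _ h => h.2

/-- converse step in the causal Chernoff–Stein lemma (finite-`n`).
With the same hypotheses and `A_n` as in the achievability step, for any acceptance
region `B_n ⊆ (𝒳 × 𝒴)^n`,
`Pr(B_n | H₁) ≥ 2^{−n(R+δ)} (1 − Pr(A_nᶜ | H₀) − Pr(B_nᶜ | H₀))`. -/
theorem causal_stein_converse {n : ℕ}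
    (p : (Fin n → α) → (Fin n → β) → ℝ) (hp : IsPmf p) (R δ : ℝ) (hδ : 0 < δ)
    (B : (Fin n → α) → (Fin n → β) → Prop) :
    (2 : ℝ) ^ (-((n : ℝ) * (R + δ))) *
        (1 - (∑ x, ∑ y, if ¬ acceptRegion p R δ x y then p x y else 0) -
          (∑ x, ∑ y, if ¬ B x y then p x y else 0)) ≤
      ∑ x, ∑ y, if B x y then ccX p 1 x y * pY p y else 0 :=
  causal_stein_converse_general p hp R δ B
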